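/- Every self-centered chordal graph with at least two vertices is 2-connected. -/

import Mathlib

open SimpleGraph

variable {V : Type*}

noncomputable instance (priority := low) instFintypeSubsetOfFinite [Finite V] (s : Set V) :
    Fintype ↥s := Fintype.ofFinite _

/-- Eccentricity of a vertex: max distance to any vertex. -/
noncomputable def ecc [Fintype V] (G : SimpleGraph V) (x : V) : ℕ :=
  Finset.univ.sup (G.dist x)

/-- Radius: minimum eccentricity. -/
noncomputable def grad [Fintype V] (G : SimpleGraph V) : ℕ :=
  sInf (Set.range (ecc G))

/-- Diameter: maximum eccentricity. -/
noncomputable def gdiam [Fintype V] (G : SimpleGraph V) : ℕ :=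
  Finset.univ.sup (ecc G)

/-- The center: vertices of minimum eccentricity. -/
def center [Fintype V] (G : SimpleGraph V) : Set V :=
  {x | ecc G x = grad G}

/-- `G` has an induced cycle of length `n`. -/
def HasInducedCycle (G : SimpleGraph V) (n : ℕ) : Prop :=
  3 ≤ n ∧ ∃ f : ZMod n → V, Function.Injective f ∧
    ∀ i j : ZMod n, G.Adj (f i) (f j) ↔ (i = j + 1 ∨ j = i + 1)

/-- `G` is `k`-chordal: no induced cycle of length greater than `k`. -/
def KChordal (G : SimpleGraph V) (k : ℕ) : Prop :=
  ∀ n, k < n → ¬ HasInducedCycle G n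

/-! Let `x` be a vertex farthest from `v`. For `y ≠ v`, a shortest `y`–`x` path through `v` would
have length at least `d(y, v) + d(v, x) > ecc v = ecc y ≥ d(y, x)`, so every shortest path to `x`
avoids `v`, and all vertices other than `v` reach `x` in `G - v`. -/

namespace SimpleGraph

variable {G : SimpleGraph V} {v x y : V}

lemma nontrivial_of_ne_top (h : G ≠ ⊤) : Nontrivial V := by
  rw [← not_subsingleton_iff_nontrivial, ← SimpleGraph.subsingleton_iff]
  exact fun _ => h (Subsingleton.elim _ _)

lemma Walk.dist_add_dist_le_length (p : G.Walk y x) (hv : v ∈ p.support) :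
    G.dist y v + G.dist v x ≤ p.length := by
  classical
  rw [← p.take_spec hv, Walk.length_append]
  exact add_le_add (dist_le _) (dist_le _)

lemma Connected.reachable_induce_compl_singleton_of_dist_le (hG : G.Connected) (hyv : y ≠ v)
    (hxv : x ≠ v) (h : G.dist y x ≤ G.dist v x) :
    (G.induce {v}ᶜ).Reachable ⟨y, hyv⟩ ⟨x, hxv⟩ := by
  obtain ⟨p, hp⟩ := hG.exists_walk_length_eq_dist y x
  have hvp : v ∉ p.support := fun hv => by
    have := p.dist_add_dist_le_length hv
    have := hG.pos_dist_of_ne hyv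
    omega
  exact (p.induce {v}ᶜ fun w hw hwv => hvp (hwv ▸ hw)).reachable

lemma Connected.induce_compl_singleton_connected (hG : G.Connected) (hxv : x ≠ v)
    (h : ∀ y, G.dist y x ≤ G.dist v x) : (G.induce {v}ᶜ).Connected := by
  have hx_reach (y : ↥({v}ᶜ : Set V)) : (G.induce {v}ᶜ).Reachable y ⟨x, hxv⟩ :=
    hG.reachable_induce_compl_singleton_of_dist_le y.2 hxv (h y)
  exact (connected_iff _).2 ⟨fun a b => (hx_reach a).trans (hx_reach b).symm, ⟨⟨x, hxv⟩⟩⟩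

end SimpleGraph

section

variable [Fintype V] (G : SimpleGraph V)

lemma dist_le_ecc (x y : V) : G.dist x y ≤ ecc G x :=
  Finset.le_sup (Finset.mem_univ y)

lemma exists_dist_eq_ecc [Nonempty V] (x : V) : ∃ y, G.dist x y = ecc G x := by
  obtain ⟨y, -, hy⟩ := Finset.exists_mem_eq_sup Finset.univ Finset.univ_nonempty (G.dist x)
  exact ⟨y, hy.symm⟩

end

lemma SimpleGraph.Connected.ecc_pos [Fintype V] [Nontrivial V] {G : SimpleGraph V}
    (hG : G.Connected) (x : V) : 0 < ecc G x := by
  obtain ⟨y, hyx⟩ := exists_ne x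
  exact (hG.pos_dist_of_ne hyx.symm).trans_le (dist_le_ecc G x y)

theorem self_centered_no_cutvertex_general [Fintype V] (G : SimpleGraph V) (hG : G.Connected)
    (hnc : G ≠ ⊤) (hsc : ∀ x, ecc G x = grad G) :
    ∀ v : V, (G.induce ({v}ᶜ : Set V)).Connected := by
  have : Nontrivial V := nontrivial_of_ne_top hnc
  intro v
  obtain ⟨x, hx⟩ := exists_dist_eq_ecc G v
  have hxv : x ≠ v := by
    rintro rfl
    exact (hG.ecc_pos x).ne' (hx.symm.trans SimpleGraph.dist_self)
  refine hG.induce_compl_singleton_connected hxv fun y => ?_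
  calc G.dist y x ≤ ecc G y := dist_le_ecc G y x
    _ = ecc G v := (hsc y).trans (hsc v).symm
    _ = G.dist v x := hx.symm

theorem self_centered_no_cutvertex [Fintype V] (G : SimpleGraph V) (hG : G.Connected)
    (hch : KChordal G 3) (hnc : G ≠ ⊤) (hsc : ∀ x, ecc G x = grad G) :
    ∀ v : V, (G.induce ({v}ᶜ : Set V)).Connected :=
  self_centered_no_cutvertex_general G hG hnc hsc
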